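/- (Consensus inequality.) Consider an algorithm of the form (alg) with a trajectory (x_i^k, y_i^k, z_i^k, u_i^k, v_i^k) where the Laplacians satisfy 1_nᵀ L^k = 0 for all k, and let (x*ᵢ, y*ᵢ, z*ᵢ, u*ᵢ, v*ᵢ) be a fixed point satisfying the fixed-point conditions (consensus, optimality, robustness). Let Ψ have columns forming a basis of the nullspace of [F_x F_u], let P ≻ 0 be symmetric, ρ ≥ 0, M₀ := [[−2mL, L+m],[L+m, −2]], and suppose Ψᵀ N₁ᵀ · blockdiag(P, −ρ²P, M₀) · N₁ Ψ ⪯ 0, where N₁ stacks the rows [A B_u], [I 0], [C_y D_{yu}], [0 1]. Then, with x̃^k ∈ ℝ^{nν}, ỹ^k, ũ^k ∈ ℝⁿ the stacked error vectors x̃ᵢ^k = x_i^k − x*ᵢ, ỹᵢ^k = y_i^k − y*ᵢ, ũᵢ^k = u_i^k − u*ᵢ, for every k: (x̃^{k+1})ᵀ (Π ⊗ P) x̃^{k+1} − ρ² (x̃^k)ᵀ (Π ⊗ P) x̃^k + [ỹ^k; ũ^k]ᵀ (M₀ ⊗ Π) [ỹ^k; ũ^k] ≤ 0, where Π := (1/n)·1_n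 1_nᵀ. -/

import Mathlib

open Matrix BigOperators Kronecker

/-- The projection matrix `Π = (1/n) 1ₙ 1ₙᵀ` onto the span of the all-ones vector. -/
noncomputable def projOnes (n : ℕ) : Matrix (Fin n) (Fin n) ℝ :=
  Matrix.of fun _ _ => (n : ℝ)⁻¹

/-- The matrix `M₀ = [[−2mL, L+m],[L+m, −2]]`. -/
noncomputable def M0 (m L : ℝ) : Matrix (Fin 2) (Fin 2) ℝ :=
  !![-(2*m*L), L+m; L+m, -2]

/-- The quadratic form `[y; u]ᵀ M₀ [y; u]`. -/
def quadM0 (m L y u : ℝ) : ℝ := -(2*m*L) * y^2 + 2*(L+m) * y * u - 2 * u^2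

/-!
The projector `Π` only sees agent sums: for `w = (wᵢ)ᵢ`, `wᵀ (Π ⊗ P) w = (1/n) (∑ᵢ wᵢ)ᵀ P (∑ᵢ wᵢ)`,
and likewise for `M₀ ⊗ Π`. Summing the error dynamics over the agents removes the interconnection
term, because `1ᵀ Lᵏ = 0` forces `∑ᵢ vᵢᵏ = 0` while `v* = 0`. The summed errors `(X, U)` therefore
obey the single-agent system `X⁺ = A X + U B_u`, `Y = C_y X + D_yu U` and satisfy `F_x X + U F_u = 0`,
so `(X, U) = Ψ s` for some `s`, and the claim is `1/n` times the LMI evaluated at `s`.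
-/

section
variable {ι : Type*} [Fintype ι] {n : ℕ}

theorem projOnes_kronecker_mulVec (P : Matrix ι ι ℝ) (w : Fin n × ι → ℝ) :
    (projOnes n ⊗ₖ P) *ᵥ w = fun p => (n : ℝ)⁻¹ * (P *ᵥ ∑ i, fun a => w (i, a)) p.2 := by
  ext ⟨i, a⟩
  simp only [mulVec, dotProduct, kroneckerMap_apply, projOnes, of_apply, Fintype.sum_prod_type,
    Finset.sum_apply, Finset.mul_sum]
  rw [Finset.sum_comm]
  exact Finset.sum_congr rfl fun _ _ => Finset.sum_congr rfl fun _ _ => by ring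

theorem dotProduct_projOnes_kronecker_mulVec (P : Matrix ι ι ℝ) (w : Fin n × ι → ℝ) :
    w ⬝ᵥ (projOnes n ⊗ₖ P) *ᵥ w
      = (n : ℝ)⁻¹ * ((∑ i, fun a => w (i, a)) ⬝ᵥ P *ᵥ ∑ i, fun a => w (i, a)) := by
  rw [projOnes_kronecker_mulVec]
  simp only [dotProduct, Fintype.sum_prod_type, Finset.sum_apply, Finset.mul_sum, Finset.sum_mul]
  rw [Finset.sum_comm]
  exact Finset.sum_congr rfl fun _ _ => Finset.sum_congr rfl fun _ _ => by ring

theorem dotProduct_kronecker_projOnes_mulVec (M : Matrix ι ι ℝ) (q : ι × Fin n → ℝ) :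
    q ⬝ᵥ (M ⊗ₖ projOnes n) *ᵥ q
      = (n : ℝ)⁻¹ * ((∑ j, fun a => q (a, j)) ⬝ᵥ M *ᵥ ∑ j, fun a => q (a, j)) := by
  let e := Equiv.prodComm ι (Fin n)
  have hswap : M ⊗ₖ projOnes n = (projOnes n ⊗ₖ M).submatrix e e := by
    ext ⟨a, i⟩ ⟨b, j⟩; simp [e, projOnes, mul_comm]
  rw [hswap, submatrix_mulVec_equiv, ← comp_equiv_symm_dotProduct,
    dotProduct_projOnes_kronecker_mulVec]
  rfl

theorem dotProduct_M0_mulVec (m L : ℝ) (q : Fin 2 → ℝ) :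
    q ⬝ᵥ M0 m L *ᵥ q = quadM0 m L (q 0) (q 1) := by
  simp only [M0, quadM0, dotProduct, mulVec, Fin.sum_univ_two, of_apply, cons_val', cons_val_zero,
    cons_val_one, empty_val', cons_val_fin_one]
  ring

theorem sum_sum_smul_eq_zero_of_vecMul_eq_zero {E : Type*} [AddCommGroup E] [Module ℝ E]
    {Lap : Matrix (Fin n) (Fin n) ℝ} (hLap : vecMul (fun _ => 1) Lap = 0) (z : Fin n → E) :
    ∑ i, ∑ j, Lap i j • z j = 0 := by
  rw [Finset.sum_comm]
  refine Finset.sum_eq_zero fun j _ => ?_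
  have hcol : ∑ i, Lap i j = 0 := by simpa [vecMul, dotProduct] using congrFun hLap j
  rw [← Finset.sum_smul, hcol, zero_smul]
end

section
variable {ι m o p : Type*} [Fintype ι] [Fintype o] [Fintype p]

theorem sum_sub_eq_mulVec_sum_sub_add_smul (A : Matrix m o ℝ) (b : m → ℝ) (B : Matrix m p ℝ)
    {x x' : ι → o → ℝ} {y y' : ι → m → ℝ} {u u' : ι → ℝ} {v v' : ι → p → ℝ}
    (hy : ∀ i, y i = A *ᵥ x i + u i • b + B *ᵥ v i)
    (hy' : ∀ i, y' i = A *ᵥ x' i + u' i • b + B *ᵥ v' i) (hv : ∑ i, v i = ∑ i, v' i) :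
    ∑ i, (y i - y' i) = A *ᵥ ∑ i, (x i - x' i) + (∑ i, (u i - u' i)) • b := by
  simp only [hy, hy', Finset.sum_sub_distrib, Finset.sum_add_distrib, ← mulVec_sum,
    ← Finset.sum_smul, hv, mulVec_sub, sub_smul]
  abel

theorem sum_sub_eq_dotProduct_sum_sub_add_mul (c : o → ℝ) (d : ℝ) (e : p → ℝ)
    {x x' : ι → o → ℝ} {y y' : ι → ℝ} {u u' : ι → ℝ} {v v' : ι → p → ℝ}
    (hy : ∀ i, y i = c ⬝ᵥ x i + d * u i + e ⬝ᵥ v i)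
    (hy' : ∀ i, y' i = c ⬝ᵥ x' i + d * u' i + e ⬝ᵥ v' i) (hv : ∑ i, v i = ∑ i, v' i) :
    ∑ i, (y i - y' i) = c ⬝ᵥ ∑ i, (x i - x' i) + d * ∑ i, (u i - u' i) := by
  simp only [hy, hy', Finset.sum_sub_distrib, Finset.sum_add_distrib, ← dotProduct_sum,
    ← Finset.mul_sum, hv, dotProduct_sub]
  ring

theorem mulVec_sum_sub_add_smul_eq_zero (F : Matrix m o ℝ) (f : m → ℝ) {x x' : ι → o → ℝ}
    {u u' : ι → ℝ} (h : ∑ i, (F *ᵥ x i + u i • f) = 0) (h' : ∑ i, (F *ᵥ x' i + u' i • f) = 0) :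
    F *ᵥ ∑ i, (x i - x' i) + (∑ i, (u i - u' i)) • f = 0 := by
  simp only [Finset.sum_add_distrib, ← mulVec_sum, ← Finset.sum_smul] at h h'
  simp only [Finset.sum_sub_distrib, mulVec_sub, sub_smul]
  rw [sub_add_sub_comm, h, h', sub_zero]
end

theorem stmt_7_general
    (ν c r n sdim : ℕ) (m L ρ : ℝ)
    (A : Matrix (Fin ν) (Fin ν) ℝ) (Bu : Fin ν → ℝ) (Bv : Matrix (Fin ν) (Fin c) ℝ)
    (Cy : Fin ν → ℝ) (Dyu : ℝ) (Dyv : Fin c → ℝ)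
    (Fx : Matrix (Fin r) (Fin ν) ℝ) (Fu : Fin r → ℝ)
    -- Laplacians are balanced: 1ᵀ L^k = 0
    (Lap : ℕ → Matrix (Fin n) (Fin n) ℝ)
    (hL2 : ∀ k, Matrix.vecMul (fun _ => (1 : ℝ)) (Lap k) = 0)
    -- trajectory of the algorithm
    (x : ℕ → Fin n → Fin ν → ℝ) (y u : ℕ → Fin n → ℝ) (z v : ℕ → Fin n → Fin c → ℝ)
    (htraj1 : ∀ k i, x (k+1) i = A.mulVec (x k i) + u k i • Bu + Bv.mulVec (v k i))
    (htraj2 : ∀ k i, y k i = Cy ⬝ᵥ x k i + Dyu * u k i + Dyv ⬝ᵥ v k i)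
    (htraj5 : ∀ k i, v k i = ∑ j, Lap k i j • z k j)
    (htraj6 : ∀ k, ∑ j, (Fx.mulVec (x k j) + u k j • Fu) = 0)
    -- fixed point satisfying the fixed-point conditions
    (xstar : Fin n → Fin ν → ℝ) (ystar ustar : Fin n → ℝ)
    (vstar : Fin n → Fin c → ℝ)
    (hstar1 : ∀ i, xstar i = A.mulVec (xstar i) + ustar i • Bu + Bv.mulVec (vstar i))
    (hstar2 : ∀ i, ystar i = Cy ⬝ᵥ xstar i + Dyu * ustar i + Dyv ⬝ᵥ vstar i)
    (hstar6 : (∑ j, (Fx.mulVec (xstar j) + ustar j • Fu)) = 0)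
    (hrob_v : ∀ i, vstar i = 0)
    -- Ψ: columns form a basis of the nullspace of [Fx Fu]
    (Ψx : Matrix (Fin ν) (Fin sdim) ℝ) (Ψu : Fin sdim → ℝ)
    (hΨ2 : ∀ (xv : Fin ν → ℝ) (uv : ℝ), Fx.mulVec xv + uv • Fu = 0 →
      ∃ s : Fin sdim → ℝ, Ψx.mulVec s = xv ∧ Ψu ⬝ᵥ s = uv)
    -- P ≻ 0 and (LMI-1) as a quadratic form
    (P : Matrix (Fin ν) (Fin ν) ℝ)
    (hLMI1 : ∀ s : Fin sdim → ℝ,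
      (A.mulVec (Ψx.mulVec s) + (Ψu ⬝ᵥ s) • Bu) ⬝ᵥ
          P.mulVec (A.mulVec (Ψx.mulVec s) + (Ψu ⬝ᵥ s) • Bu)
        - ρ^2 * ((Ψx.mulVec s) ⬝ᵥ P.mulVec (Ψx.mulVec s))
        + quadM0 m L (Cy ⬝ᵥ (Ψx.mulVec s) + Dyu * (Ψu ⬝ᵥ s)) (Ψu ⬝ᵥ s) ≤ 0) :
    ∀ k : ℕ,
      (fun p : Fin n × Fin ν => x (k+1) p.1 p.2 - xstar p.1 p.2) ⬝ᵥ
          (projOnes n ⊗ₖ P).mulVec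
          (fun p : Fin n × Fin ν => x (k+1) p.1 p.2 - xstar p.1 p.2)
        - ρ^2 * ((fun p : Fin n × Fin ν => x k p.1 p.2 - xstar p.1 p.2) ⬝ᵥ
            (projOnes n ⊗ₖ P).mulVec
            (fun p : Fin n × Fin ν => x k p.1 p.2 - xstar p.1 p.2))
        + (fun p : Fin 2 × Fin n =>
              if p.1 = 0 then y k p.2 - ystar p.2 else u k p.2 - ustar p.2) ⬝ᵥ
            ((M0 m L) ⊗ₖ projOnes n).mulVec
            (fun p : Fin 2 × Fin n =>
              if p.1 = 0 then y k p.2 - ystar p.2 else u k p.2 - ustar p.2) ≤ 0 := by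
  intro k
  have hv : ∑ i, v k i = ∑ i, vstar i := by
    simp only [htraj5, hrob_v, Finset.sum_const_zero]
    exact sum_sum_smul_eq_zero_of_vecMul_eq_zero (hL2 k) _
  obtain ⟨s, hsx, hsu⟩ := hΨ2 _ _ (mulVec_sum_sub_add_smul_eq_zero Fx Fu (htraj6 k) hstar6)
  have hLMI := hLMI1 s
  rw [hsx, hsu, ← sum_sub_eq_mulVec_sum_sub_add_smul A Bu Bv (htraj1 k) hstar1 hv,
    ← sum_sub_eq_dotProduct_sum_sub_add_mul Cy Dyu Dyv (htraj2 k) hstar2 hv] at hLMI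
  rw [dotProduct_projOnes_kronecker_mulVec, dotProduct_projOnes_kronecker_mulVec,
    dotProduct_kronecker_projOnes_mulVec, dotProduct_M0_mulVec]
  simp only [Finset.sum_apply, Fin.isValue, if_true, one_ne_zero, if_false]
  linear_combination (n : ℝ)⁻¹ * hLMI

/-- Consensus inequality: feasibility of (LMI-1) implies the per-step consensus
Lyapunov inequality along any trajectory. -/
theorem stmt_7
    (ν c r n sdim : ℕ) (m L ρ : ℝ)
    (hm : 0 < m) (hmL : m ≤ L) (hρ : 0 ≤ ρ)
    (A : Matrix (Fin ν) (Fin ν) ℝ) (Bu : Fin ν → ℝ) (Bv : Matrix (Fin ν) (Fin c) ℝ)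
    (Cy : Fin ν → ℝ) (Dyu : ℝ) (Dyv : Fin c → ℝ)
    (Cz : Matrix (Fin c) (Fin ν) ℝ) (Dzu : Fin c → ℝ) (Dzv : Matrix (Fin c) (Fin c) ℝ)
    (Fx : Matrix (Fin r) (Fin ν) ℝ) (Fu : Fin r → ℝ)
    -- Laplacians are balanced: 1ᵀ L^k = 0
    (Lap : ℕ → Matrix (Fin n) (Fin n) ℝ)
    (hL2 : ∀ k, Matrix.vecMul (fun _ => (1 : ℝ)) (Lap k) = 0)
    -- trajectory of the algorithm
    (x : ℕ → Fin n → Fin ν → ℝ) (y u : ℕ → Fin n → ℝ) (z v : ℕ → Fin n → Fin c → ℝ)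
    (htraj1 : ∀ k i, x (k+1) i = A.mulVec (x k i) + u k i • Bu + Bv.mulVec (v k i))
    (htraj2 : ∀ k i, y k i = Cy ⬝ᵥ x k i + Dyu * u k i + Dyv ⬝ᵥ v k i)
    (htraj3 : ∀ k i, z k i = Cz.mulVec (x k i) + u k i • Dzu + Dzv.mulVec (v k i))
    (htraj5 : ∀ k i, v k i = ∑ j, Lap k i j • z k j)
    (htraj6 : ∀ k, ∑ j, (Fx.mulVec (x k j) + u k j • Fu) = 0)
    -- fixed point satisfying the fixed-point conditions
    (xstar : Fin n → Fin ν → ℝ) (ystar ustar : Fin n → ℝ)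
    (zstar vstar : Fin n → Fin c → ℝ)
    (hstar1 : ∀ i, xstar i = A.mulVec (xstar i) + ustar i • Bu + Bv.mulVec (vstar i))
    (hstar2 : ∀ i, ystar i = Cy ⬝ᵥ xstar i + Dyu * ustar i + Dyv ⬝ᵥ vstar i)
    (hstar3 : ∀ i, zstar i = Cz.mulVec (xstar i) + ustar i • Dzu + Dzv.mulVec (vstar i))
    (hstar5 : ∀ k i, vstar i = ∑ j, Lap k i j • zstar j)
    (hstar6 : (∑ j, (Fx.mulVec (xstar j) + ustar j • Fu)) = 0)
    (hcons_y : ∀ i j, ystar i = ystar j) (hopt_u : ∑ i, ustar i = 0)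
    (hcons_z : ∀ i j, zstar i = zstar j) (hrob_v : ∀ i, vstar i = 0)
    -- Ψ: columns form a basis of the nullspace of [Fx Fu]
    (Ψx : Matrix (Fin ν) (Fin sdim) ℝ) (Ψu : Fin sdim → ℝ)
    (hΨ1 : ∀ s : Fin sdim → ℝ, Fx.mulVec (Ψx.mulVec s) + (Ψu ⬝ᵥ s) • Fu = 0)
    (hΨ2 : ∀ (xv : Fin ν → ℝ) (uv : ℝ), Fx.mulVec xv + uv • Fu = 0 →
      ∃ s : Fin sdim → ℝ, Ψx.mulVec s = xv ∧ Ψu ⬝ᵥ s = uv)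
    (hΨ3 : ∀ s : Fin sdim → ℝ, Ψx.mulVec s = 0 → Ψu ⬝ᵥ s = 0 → s = 0)
    -- P ≻ 0 and (LMI-1) as a quadratic form
    (P : Matrix (Fin ν) (Fin ν) ℝ) (hP : P.PosDef)
    (hLMI1 : ∀ s : Fin sdim → ℝ,
      (A.mulVec (Ψx.mulVec s) + (Ψu ⬝ᵥ s) • Bu) ⬝ᵥ
          P.mulVec (A.mulVec (Ψx.mulVec s) + (Ψu ⬝ᵥ s) • Bu)
        - ρ^2 * ((Ψx.mulVec s) ⬝ᵥ P.mulVec (Ψx.mulVec s))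
        + quadM0 m L (Cy ⬝ᵥ (Ψx.mulVec s) + Dyu * (Ψu ⬝ᵥ s)) (Ψu ⬝ᵥ s) ≤ 0) :
    ∀ k : ℕ,
      (fun p : Fin n × Fin ν => x (k+1) p.1 p.2 - xstar p.1 p.2) ⬝ᵥ
          (projOnes n ⊗ₖ P).mulVec
          (fun p : Fin n × Fin ν => x (k+1) p.1 p.2 - xstar p.1 p.2)
        - ρ^2 * ((fun p : Fin n × Fin ν => x k p.1 p.2 - xstar p.1 p.2) ⬝ᵥ
            (projOnes n ⊗ₖ P).mulVec
            (fun p : Fin n × Fin ν => x k p.1 p.2 - xstar p.1 p.2))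
        + (fun p : Fin 2 × Fin n =>
              if p.1 = 0 then y k p.2 - ystar p.2 else u k p.2 - ustar p.2) ⬝ᵥ
            ((M0 m L) ⊗ₖ projOnes n).mulVec
            (fun p : Fin 2 × Fin n =>
              if p.1 = 0 then y k p.2 - ystar p.2 else u k p.2 - ustar p.2) ≤ 0 :=
  stmt_7_general ν c r n sdim m L ρ A Bu Bv Cy Dyu Dyv Fx Fu Lap hL2 x y u z v htraj1 htraj2 htraj5
    htraj6 xstar ystar ustar vstar hstar1 hstar2 hstar6 hrob_v Ψx Ψu hΨ2 P hLMI1
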